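/- Fix r ≥ 2, m ≥ 1, and let A_k = I_{r^{m-k}} ⊗ 𝟙_{1/r} ⊗ I_{r^{k-1}} for k ∈ [m]. For i ∈ [r^m], define D_k(i) = {j : (A_k ⋯ A_1)^{ij} > 0} with D_0(i)={i}, and for k ∈ [m] define C_k(i) = D_k(i) \ D_{k-1}(i). Then the sets C_1(i),...,C_m(i) are pairwise disjoint and their union equals [r^m] \ {i}. Moreover |C_k(i)| = (r-1)·r^{k-1}. -/

import Mathlib

open Matrix BigOperators

/-!
The entry `(A_k)^{ij}` is positive exactly when the base-`r` expansions of `i` and `j` agree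
except possibly in the `k`-th lowest digit. Composing these supports, `(A_k ⋯ A_1)^{ij} > 0` iff
`i` and `j` agree in all digits but the `k` lowest, i.e. `i / r ^ k = j / r ^ k`: so `D_k(i)` is
the block of size `r ^ k` containing `i`. These blocks increase from `{i}` to everything, hence
their successive differences `C_k(i)` partition the complement of `i`, and
`|C_k(i)| = r ^ k - r ^ (k - 1)`.
-/

/-- Kronecker product of square matrices, with blocks of `A ⊗ B` given by `A^{pq} • B`,
reindexed to `Fin (M * N)`. -/
noncomputable def kron {M N : ℕ} (A : Matrix (Fin M) (Fin M) ℝ) (B : Matrix (Fin N) (Fin N) ℝ) :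
    Matrix (Fin (M * N)) (Fin (M * N)) ℝ :=
  Matrix.reindex finProdFinEquiv finProdFinEquiv (Matrix.kroneckerMap (· * ·) A B)

/-- The n×n matrix with every entry equal to 1/n. -/
noncomputable def onesMat (n : ℕ) : Matrix (Fin n) (Fin n) ℝ := fun _ _ => 1 / (n : ℝ)


lemma sizeEq (r m : ℕ) (k : Fin m) : r ^ (m - 1 - k.1) * (r * r ^ k.1) = r ^ m := by
  have hk : k.1 < m := k.isLt
  rw [← pow_succ', ← pow_add]
  congr 1
  omega

/-- The radix-r butterfly matrix `A_k = I_{r^(m-k)} ⊗ 𝟙_{1/r} ⊗ I_{r^(k-1)}`, where the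
1-based index `k ∈ [m]` is represented by the 0-based `k : Fin m` (so `k.1 = k - 1`). -/
noncomputable def Ak (r m : ℕ) (k : Fin m) : Matrix (Fin (r ^ m)) (Fin (r ^ m)) ℝ :=
  Matrix.reindex (finCongr (sizeEq r m k)) (finCongr (sizeEq r m k))
    (kron (1 : Matrix (Fin (r ^ (m - 1 - k.1))) (Fin (r ^ (m - 1 - k.1))) ℝ)
      (kron (onesMat r) (1 : Matrix (Fin (r ^ k.1)) (Fin (r ^ k.1)) ℝ)))

/-- The support of row i of the product A_k ⋯ A_1 (the empty product for k = 0,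
giving D_0(i) = {i}). -/
def Dset (r m : ℕ) (k : ℕ) (hk : k ≤ m) (i : Fin (r ^ m)) : Set (Fin (r ^ m)) :=
  {j | 0 < ((List.ofFn (fun t : Fin k => Ak r m (Fin.castLE hk t))).reverse.prod) i j}

/-- C_k(i) = D_k(i) \ D_{k-1}(i), for 1-based k represented by k : Fin m (k.1 = k-1). -/
def Cset (r m : ℕ) (k : Fin m) (i : Fin (r ^ m)) : Set (Fin (r ^ m)) :=
  Dset r m (k.1 + 1) k.isLt i \ Dset r m k.1 (Nat.le_of_lt k.isLt) i

section Blocks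

variable {b c N : ℕ}

theorem div_eq_div_of_dvd_of_div_eq {a a' : ℕ} (hbc : b ∣ c) (h : a / b = a' / b) :
    a / c = a' / c := by
  obtain ⟨d, rfl⟩ := hbc
  rw [← Nat.div_div_eq_div_mul, ← Nat.div_div_eq_div_mul, h]

theorem mul_div_add_lt {a x : ℕ} (hbN : b ∣ N) (ha : a < N) (hx : x < b) :
    b * (a / b) + x < N := by
  have hq : a / b < N / b := Nat.div_lt_div_of_lt_of_dvd hbN ha
  calc b * (a / b) + x < b * (a / b + 1) := by rw [mul_add_one]; omega
    _ ≤ b * (N / b) := Nat.mul_le_mul_left _ hq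
    _ = N := Nat.mul_div_cancel' hbN

theorem mul_add_div_of_lt {q x : ℕ} (hx : x < b) : (b * q + x) / b = q := by
  rw [Nat.mul_add_div (by omega), Nat.div_eq_of_lt hx, add_zero]

def sameBlock (b : ℕ) (i : Fin N) : Set (Fin N) := {j | i.1 / b = j.1 / b}

theorem sameBlock_one (i : Fin N) : sameBlock 1 i = {i} := by
  ext j
  simp [sameBlock, Fin.ext_iff, eq_comm]

theorem sameBlock_eq_univ (hNb : N ≤ b) (i : Fin N) : sameBlock b i = Set.univ := by
  ext j
  simp [sameBlock, Nat.div_eq_of_lt (i.2.trans_le hNb), Nat.div_eq_of_lt (j.2.trans_le hNb)]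

theorem sameBlock_subset_of_dvd (hbc : b ∣ c) (i : Fin N) : sameBlock b i ⊆ sameBlock c i :=
  fun _ => div_eq_div_of_dvd_of_div_eq hbc

theorem ncard_sameBlock (hbN : b ∣ N) (i : Fin N) : (sameBlock b i).ncard = b := by
  have hb : 0 < b := Nat.pos_of_dvd_of_pos hbN i.pos
  let e : Fin b → Fin N := fun x => ⟨b * (i.1 / b) + x, mul_div_add_lt hbN i.2 x.2⟩
  have he : Function.Injective e := fun x y h => Fin.ext (by simpa [e] using congrArg Fin.val h)
  have hrange : Set.range e = sameBlock b i := by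
    ext j
    simp only [Set.mem_range, sameBlock, Set.mem_ofPred_eq]
    constructor
    · rintro ⟨x, rfl⟩
      exact (mul_add_div_of_lt x.2).symm
    · intro h
      exact ⟨⟨j.1 % b, Nat.mod_lt _ hb⟩, Fin.ext (by simp [e, h, Nat.div_add_mod])⟩
  rw [← hrange, Set.ncard_range_of_injective he, Nat.card_eq_fintype_card, Fintype.card_fin]

/-- With `b = r ^ k` and `c = r ^ (k + 1)`: the support of `A_{k+1}` composed with the support of
`A_k ⋯ A_1` is the support of `A_{k+1} ⋯ A_1`. -/
theorem exists_mod_eq_and_div_eq_iff (hbc : b ∣ c) (hcN : c ∣ N) (i j : Fin N) :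
    (∃ l : Fin N, (i.1 / c = l.1 / c ∧ i.1 % b = l.1 % b) ∧ l.1 / b = j.1 / b) ↔
      i.1 / c = j.1 / c := by
  refine ⟨fun ⟨l, ⟨hc, _⟩, hb⟩ => hc.trans (div_eq_div_of_dvd_of_div_eq hbc hb), fun h => ?_⟩
  have hb : 0 < b := Nat.pos_of_dvd_of_pos (hbc.trans hcN) i.pos
  let l : Fin N := ⟨b * (j.1 / b) + i.1 % b, mul_div_add_lt (hbc.trans hcN) j.2 (Nat.mod_lt _ hb)⟩
  have hl : l.1 / b = j.1 / b := mul_add_div_of_lt (Nat.mod_lt _ hb)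
  refine ⟨l, ⟨h.trans (div_eq_div_of_dvd_of_div_eq hbc hl).symm, ?_⟩, hl⟩
  simp [l]

end Blocks

theorem Monotone.disjoint_sdiff_succ {α : Type*} {D : ℕ → Set α} (hD : Monotone D) {k k' : ℕ}
    (h : k ≠ k') : Disjoint (D (k + 1) \ D k) (D (k' + 1) \ D k') := by
  rw [← Order.succ_eq_add_one, ← Order.succ_eq_add_one, ← hD.disjointed_succ (not_isMax k),
    ← hD.disjointed_succ (not_isMax k')]
  exact disjoint_disjointed D (by simpa using h)

theorem Monotone.iUnion_fin_sdiff_succ {α : Type*} {D : ℕ → Set α} (hD : Monotone D) (m : ℕ) :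
    ⋃ k : Fin m, (D (k + 1) \ D k) = D m \ D 0 := by
  rw [← biUnion_Ioc_disjointed_of_monotone hD (Nat.zero_le m)]
  ext x
  simp only [Set.mem_iUnion, Finset.mem_Ioc, exists_prop]
  constructor
  · rintro ⟨k, hk⟩
    refine ⟨k + 1, ⟨k.1.succ_pos, k.2⟩, ?_⟩
    rwa [← Order.succ_eq_add_one, hD.disjointed_succ (not_isMax _)]
  · rintro ⟨n, ⟨hn0, hnm⟩, hx⟩
    obtain ⟨k, rfl⟩ := Nat.exists_eq_add_of_lt hn0
    refine ⟨⟨k, by omega⟩, ?_⟩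
    rwa [zero_add, ← Order.succ_eq_add_one, hD.disjointed_succ (not_isMax _)] at hx

theorem Matrix.mul_apply_pos_iff {n R : Type*} [Fintype n] [Semiring R] [LinearOrder R]
    [IsStrictOrderedRing R] {A B : Matrix n n R} (hA : ∀ i j, 0 ≤ A i j) (hB : ∀ i j, 0 ≤ B i j)
    (i j : n) : 0 < (A * B) i j ↔ ∃ l, 0 < A i l ∧ 0 < B l j := by
  rw [mul_apply, Finset.sum_pos_iff_of_nonneg fun l _ => mul_nonneg (hA i l) (hB l j)]
  simp only [Finset.mem_univ, true_and]
  refine exists_congr fun l => ⟨fun h => ⟨(hA i l).lt_of_ne ?_, (hB l j).lt_of_ne ?_⟩,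
    fun h => mul_pos h.1 h.2⟩
  all_goals rintro h0; simp [← h0] at h

theorem kron_apply {M N : ℕ} (A : Matrix (Fin M) (Fin M) ℝ) (B : Matrix (Fin N) (Fin N) ℝ)
    (i j : Fin (M * N)) : kron A B i j = A i.divNat j.divNat * B i.modNat j.modNat := by
  simp [kron, finProdFinEquiv]

section Butterfly

variable (r m : ℕ)

theorem Ak_apply (k : Fin m) (i j : Fin (r ^ m)) :
    Ak r m k i j =
      if i.1 / r ^ (k.1 + 1) = j.1 / r ^ (k.1 + 1) ∧ i.1 % r ^ k.1 = j.1 % r ^ k.1 then 1 / (r : ℝ)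
      else 0 := by
  have hdiv (x : Fin (r ^ m)) :
      ((finCongr (sizeEq r m k)).symm x).divNat.1 = x.1 / r ^ (k.1 + 1) := by
    simp [Fin.coe_divNat, pow_succ']
  have hmod (x : Fin (r ^ m)) :
      ((finCongr (sizeEq r m k)).symm x).modNat.modNat.1 = x.1 % r ^ k.1 := by
    simp [Fin.coe_modNat, Nat.mod_mod_of_dvd _ (dvd_mul_left _ _)]
  simp only [Ak, reindex_apply, submatrix_apply, kron_apply, one_apply, onesMat, Fin.ext_iff,
    hdiv, hmod]
  split_ifs <;> simp_all

theorem Ak_nonneg (k : Fin m) (i j : Fin (r ^ m)) : 0 ≤ Ak r m k i j := by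
  rw [Ak_apply]
  positivity

theorem Ak_pos_iff (hr : 0 < r) (k : Fin m) (i j : Fin (r ^ m)) :
    0 < Ak r m k i j ↔
      i.1 / r ^ (k.1 + 1) = j.1 / r ^ (k.1 + 1) ∧ i.1 % r ^ k.1 = j.1 % r ^ k.1 := by
  rw [Ak_apply]
  split_ifs with h <;> simp [h, hr]

noncomputable def butterflyProd (k : ℕ) (hk : k ≤ m) : Matrix (Fin (r ^ m)) (Fin (r ^ m)) ℝ :=
  (List.ofFn fun t : Fin k => Ak r m (Fin.castLE hk t)).reverse.prod

theorem butterflyProd_zero : butterflyProd r m 0 m.zero_le = 1 := rfl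

theorem butterflyProd_succ (k : ℕ) (hk : k + 1 ≤ m) :
    butterflyProd r m (k + 1) hk = Ak r m ⟨k, hk⟩ * butterflyProd r m k (k.le_succ.trans hk) := by
  simp only [butterflyProd, List.ofFn_succ', List.concat_eq_append, List.reverse_append,
    List.reverse_cons, List.reverse_nil, List.nil_append, List.singleton_append, List.prod_cons]
  rfl

theorem butterflyProd_nonneg (k : ℕ) (hk : k ≤ m) (i j : Fin (r ^ m)) :
    0 ≤ butterflyProd r m k hk i j := by
  induction k generalizing i j with
  | zero => rw [butterflyProd_zero, one_apply]; split_ifs <;> norm_num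
  | succ k ih =>
    rw [butterflyProd_succ, mul_apply]
    exact Finset.sum_nonneg fun l _ => mul_nonneg (Ak_nonneg r m _ i l) (ih _ l j)

theorem butterflyProd_pos_iff (hr : 0 < r) (k : ℕ) (hk : k ≤ m) (i j : Fin (r ^ m)) :
    0 < butterflyProd r m k hk i j ↔ i.1 / r ^ k = j.1 / r ^ k := by
  induction k generalizing i j with
  | zero =>
    rw [butterflyProd_zero, one_apply, pow_zero, Nat.div_one, Nat.div_one, ← Fin.ext_iff]
    split_ifs <;> simp_all
  | succ k ih =>
    rw [butterflyProd_succ, mul_apply_pos_iff (Ak_nonneg r m _) (butterflyProd_nonneg r m k _)]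
    simp only [Ak_pos_iff r m hr, ih]
    exact exists_mod_eq_and_div_eq_iff (pow_dvd_pow r k.le_succ) (pow_dvd_pow r hk) i j

theorem Dset_eq_sameBlock (hr : 0 < r) (k : ℕ) (hk : k ≤ m) (i : Fin (r ^ m)) :
    Dset r m k hk i = sameBlock (r ^ k) i :=
  Set.ext fun j => butterflyProd_pos_iff r m hr k hk i j

end Butterfly

theorem butterfly_Cset_partition_general (r m : ℕ) (hr : 2 ≤ r) (i : Fin (r ^ m)) :
    (∀ k k' : Fin m, k ≠ k' → Cset r m k i ∩ Cset r m k' i = ∅) ∧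
    (⋃ k : Fin m, Cset r m k i) = Set.univ \ {i} ∧
    (∀ k : Fin m, (Cset r m k i).ncard = (r - 1) * r ^ k.1) := by
  have hr0 : 0 < r := by omega
  have hD : Monotone fun k => sameBlock (r ^ k) i := fun k k' h =>
    sameBlock_subset_of_dvd (pow_dvd_pow r h) i
  have hC (k : Fin m) : Cset r m k i = sameBlock (r ^ (k.1 + 1)) i \ sameBlock (r ^ k.1) i := by
    rw [Cset, Dset_eq_sameBlock r m hr0, Dset_eq_sameBlock r m hr0]
  refine ⟨fun k k' hkk' => ?_, ?_, fun k => ?_⟩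
  · rw [hC, hC, ← Set.disjoint_iff_inter_eq_empty]
    exact hD.disjoint_sdiff_succ (Fin.val_injective.ne hkk')
  · rw [Set.iUnion_congr hC, hD.iUnion_fin_sdiff_succ, pow_zero, sameBlock_one,
      sameBlock_eq_univ le_rfl]
  · rw [hC, Set.ncard_sdiff (hD k.1.le_succ), ncard_sameBlock (pow_dvd_pow r k.2),
      ncard_sameBlock (pow_dvd_pow r k.2.le), pow_succ, ← Nat.mul_sub_one, Nat.mul_comm]

/-- The sets C_1(i), ..., C_m(i) are pairwise disjoint, their union is everything except i,
and |C_k(i)| = (r-1) r^(k-1). -/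
theorem butterfly_Cset_partition (r m : ℕ) (hr : 2 ≤ r) (hm : 1 ≤ m) (i : Fin (r ^ m)) :
    (∀ k k' : Fin m, k ≠ k' → Cset r m k i ∩ Cset r m k' i = ∅) ∧
    (⋃ k : Fin m, Cset r m k i) = Set.univ \ {i} ∧
    (∀ k : Fin m, (Cset r m k i).ncard = (r - 1) * r ^ k.1) :=
  butterfly_Cset_partition_general r m hr i
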